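/- arXiv:1701.01196 — 2 statements merged into one kernel-verified Lean document; each statement's English description precedes it below -/
import Mathlib

section
/- If a group G acts on ℝ by orientation-preserving homeomorphisms such that every element of G \ {1} acts freely on ℝ, and the action is semiconjugate to an action by translations, i.e., there is a proper monotone surjection h: ℝ → ℝ and a homomorphism τ: G → (ℝ,+) with h(g·x) = h(x) + τ(g) for all g ∈ G and x ∈ ℝ, then G is abelian. -/
/-- If a group acts freely on `ℝ` by orientation-preserving homeomorphisms and the
action is semiconjugate, via a monotone surjection `h : ℝ → ℝ`, to an action by
translations `x ↦ x + τ(g)`, then the group is abelian. -/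
theorem semiconjugate_free_action_abelian {G : Type*} [Group G] [MulAction G ℝ]
    (hcont : ∀ g : G, Continuous fun x : ℝ => g • x)
    (hmono : ∀ g : G, Monotone fun x : ℝ => g • x)
    (hfree : ∀ g : G, g ≠ 1 → ∀ x : ℝ, g • x ≠ x)
    (h : ℝ → ℝ) (hhm : Monotone h) (hhs : Function.Surjective h)
    (τ : G → ℝ) (hτ : ∀ g₁ g₂ : G, τ (g₁ * g₂) = τ g₁ + τ g₂)
    (hsemi : ∀ (g : G) (x : ℝ), h (g • x) = h x + τ g) :
    ∀ g₁ g₂ : G, g₁ * g₂ = g₂ * g₁ := by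
  have hτ1 : τ 1 = 0 := by have := hτ 1 1; simp at this; linarith
  have hτinv : ∀ g : G, τ g⁻¹ = -τ g := by
    intro g
    have := hτ g g⁻¹
    rw [mul_inv_cancel, hτ1] at this
    linarith
  have hτpow : ∀ (g : G) (n : ℕ), τ (g ^ n) = n * τ g := by
    intro g n
    induction n with
    | zero => simpa using hτ1
    | succ n ih =>
      rw [pow_succ, hτ, ih]
      push_cast
      ring
  -- sign dichotomy for free elements
  have sign : ∀ g : G, g ≠ 1 → (∀ x : ℝ, x < g • x) ∨ (∀ x : ℝ, g • x < x) := by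
    intro g hg
    have hne : ∀ x : ℝ, g • x ≠ x := hfree g hg
    have hc : Continuous fun y : ℝ => g • y - y := (hcont g).sub continuous_id
    have ivt : ∀ a b : ℝ, a < g • a → g • b < b → False := by
      intro a b ha hb
      have hsub : Set.uIcc (g • a - a) (g • b - b) ⊆
          (fun y : ℝ => g • y - y) '' Set.uIcc a b :=
        intermediate_value_uIcc hc.continuousOn
      have h0 : (0 : ℝ) ∈ Set.uIcc (g • a - a) (g • b - b) := by
        rw [Set.mem_uIcc]; right; constructor <;> linarith
      obtain ⟨c, _, hc0⟩ := hsub h0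
      simp only at hc0
      exact hne c (by linarith)
    rcases lt_or_gt_of_ne (hne 0) with h0 | h0
    · right; intro x
      rcases lt_or_gt_of_ne (hne x) with hx | hx
      · exact hx
      · exact absurd (ivt x 0 hx h0) (fun f => f)
    · left; intro x
      rcases lt_or_gt_of_ne (hne x) with hx | hx
      · exact absurd (ivt 0 x h0 hx) (fun f => f)
      · exact hx
  -- main: an element moving everything up with τ g = 0 is impossible
  have main : ∀ g : G, (∀ x : ℝ, x < g • x) → τ g = 0 → False := by
    intro g hpos hτg
    set u : ℕ → ℝ := fun n => (g ^ n) • (0 : ℝ) with hu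
    have hstep : ∀ n, u (n + 1) = g • u n := by
      intro n
      simp only [hu, pow_succ', mul_smul]
    have humono : StrictMono u := strictMono_nat_of_lt_succ fun n => by
      rw [hstep n]; exact hpos (u n)
    have hunb : ¬ BddAbove (Set.range u) := by
      intro hb
      have hlim : Filter.Tendsto u Filter.atTop (nhds (⨆ n, u n)) :=
        tendsto_atTop_ciSup humono.monotone hb
      have hlim2 : Filter.Tendsto (fun n => g • u n) Filter.atTop
          (nhds (g • (⨆ n, u n))) := ((hcont g).tendsto _).comp hlim
      have hlim3 : Filter.Tendsto (fun n => u (n + 1)) Filter.atTop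
          (nhds (⨆ n, u n)) := hlim.comp (Filter.tendsto_add_atTop_nat 1)
      have heq : (fun n => g • u n) = fun n => u (n + 1) :=
        funext fun n => (hstep n).symm
      rw [heq] at hlim2
      have : g • (⨆ n, u n) = ⨆ n, u n := tendsto_nhds_unique hlim2 hlim3
      exact (hpos _).ne' this
    obtain ⟨z, hz⟩ := hhs (h 0 + 1)
    obtain ⟨n, hn⟩ : ∃ n, z < u n := by
      by_contra hcon
      push_neg at hcon
      exact hunb ⟨z, by rintro y ⟨n, rfl⟩; exact hcon n⟩
    have hun : h (u n) = h 0 := by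
      have := hsemi (g ^ n) 0
      rw [hτpow, hτg] at this
      simpa [hu] using this
    have : h 0 + 1 ≤ h 0 := by
      rw [← hz, ← hun]
      exact hhm hn.le
    linarith
  have key : ∀ g : G, τ g = 0 → g = 1 := by
    intro g hτg
    by_contra hg
    rcases sign g hg with hp | hn
    · exact main g hp hτg
    · refine main g⁻¹ ?_ (by rw [hτinv, hτg, neg_zero])
      intro x
      have := hn (g⁻¹ • x)
      rwa [smul_inv_smul] at this
  intro g₁ g₂
  have hc : τ (g₁ * g₂ * (g₂ * g₁)⁻¹) = 0 := by
    rw [hτ, hτ, hτinv, hτ]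
    ring
  have := key _ hc
  rw [mul_inv_eq_one] at this
  exact this
end

section
/- (Hölder) A group acting freely by homeomorphisms on ℝ is abelian. -/
open Function Set

namespace HolderAux

variable {G : Type*} [Group G] [MulAction G ℝ]

theorem fix_eq_one (hfree : ∀ g : G, g ≠ 1 → ∀ x : ℝ, g • x ≠ x)
    {g : G} {x : ℝ} (h : g • x = x) : g = 1 := by
  by_contra hg; exact hfree g hg x h

theorem hmono (hcont : ∀ g : G, Continuous fun x : ℝ => g • x)
    (hfree : ∀ g : G, g ≠ 1 → ∀ x : ℝ, g • x ≠ x) (g : G) :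
    StrictMono (fun x : ℝ => g • x) := by
  rcases (hcont g).strictMono_of_inj (MulAction.injective g) with h | h
  · exact h
  · exfalso
    -- find a fixed point of g, so g = 1, contradicting strict antitonicity
    have hfix : ∃ c : ℝ, g • c = c := by
      rcases lt_trichotomy (g • (0:ℝ)) 0 with hlt | heq | hgt
      · -- ψ (g•0) > 0 > ψ 0 where ψ t = g•t - t
        have h1 : (0:ℝ) < g • (g • (0:ℝ)) - g • (0:ℝ) := by
          have := h hlt
          linarith [sub_pos.mpr this]
        have h2 : g • (0:ℝ) - (0:ℝ) < 0 := by linarith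
        have hc : ContinuousOn (fun t : ℝ => g • t - t) (Icc (g • (0:ℝ)) 0) :=
          ((hcont g).sub continuous_id).continuousOn
        have := intermediate_value_Icc' (le_of_lt hlt) hc
        have hmem : (0:ℝ) ∈ Icc ((fun t : ℝ => g • t - t) 0) ((fun t : ℝ => g • t - t) (g • (0:ℝ))) := by
          constructor <;> simp <;> linarith
        obtain ⟨c, _, hc0⟩ := this hmem
        exact ⟨c, by linarith [sub_eq_zero.mp hc0]⟩
      · exact ⟨0, heq⟩
      · have h1 : g • (g • (0:ℝ)) - g • (0:ℝ) < 0 := by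
          have := h hgt
          linarith [sub_neg.mpr this]
        have h2 : (0:ℝ) < g • (0:ℝ) - (0:ℝ) := by linarith
        have hc : ContinuousOn (fun t : ℝ => g • t - t) (Icc (0:ℝ) (g • (0:ℝ))) :=
          ((hcont g).sub continuous_id).continuousOn
        have := intermediate_value_Icc' (le_of_lt hgt) hc
        have hmem : (0:ℝ) ∈ Icc ((fun t : ℝ => g • t - t) (g • (0:ℝ))) ((fun t : ℝ => g • t - t) 0) := by
          constructor <;> simp <;> linarith
        obtain ⟨c, _, hc0⟩ := this hmem
        exact ⟨c, by linarith [sub_eq_zero.mp hc0]⟩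
    obtain ⟨c, hc⟩ := hfix
    have hg1 : g = 1 := fix_eq_one hfree hc
    have := h (zero_lt_one (α := ℝ))
    simp [hg1] at this
    linarith

/-- sign of `g•x - x` does not depend on `x` -/
theorem keyLT (hcont : ∀ g : G, Continuous fun x : ℝ => g • x)
    (hfree : ∀ g : G, g ≠ 1 → ∀ x : ℝ, g • x ≠ x) {g : G} {x : ℝ}
    (hx : g • x < x) (y : ℝ) : g • y < y := by
  by_contra hy
  push_neg at hy
  rcases eq_or_lt_of_le hy with heq | hlt
  · have : g = 1 := fix_eq_one hfree heq.symm
    rw [this] at hx; simp at hx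
  · -- IVT between x and y
    have hc : Continuous (fun t : ℝ => g • t - t) := (hcont g).sub continuous_id
    have hne : x ≠ y := by rintro rfl; linarith
    have : ∃ c : ℝ, g • c = c := by
      rcases lt_or_gt_of_ne hne with hxy | hxy
      · have := intermediate_value_Icc (le_of_lt hxy) hc.continuousOn
        have hmem : (0:ℝ) ∈ Icc ((fun t : ℝ => g • t - t) x) ((fun t : ℝ => g • t - t) y) := by
          constructor <;> simp <;> linarith
        obtain ⟨c, _, hc0⟩ := this hmem
        exact ⟨c, by linarith [sub_eq_zero.mp hc0]⟩
      · have := intermediate_value_Icc' (le_of_lt hxy) hc.continuousOn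
        have hmem : (0:ℝ) ∈ Icc ((fun t : ℝ => g • t - t) x) ((fun t : ℝ => g • t - t) y) := by
          constructor <;> simp <;> linarith
        obtain ⟨c, _, hc0⟩ := this hmem
        exact ⟨c, by linarith [sub_eq_zero.mp hc0]⟩
    obtain ⟨c, hc0⟩ := this
    have : g = 1 := fix_eq_one hfree hc0
    rw [this] at hx; simp at hx

theorem keyGT (hcont : ∀ g : G, Continuous fun x : ℝ => g • x)
    (hfree : ∀ g : G, g ≠ 1 → ∀ x : ℝ, g • x ≠ x) {g : G} {x : ℝ}
    (hx : x < g • x) (y : ℝ) : y < g • y := by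
  by_contra hy
  push_neg at hy
  rcases eq_or_lt_of_le hy with heq | hlt
  · have : g = 1 := fix_eq_one hfree heq
    rw [this] at hx; simp at hx
  · exact absurd (keyLT hcont hfree hlt x) (by push_neg; exact le_of_lt hx)

theorem keyLE (hcont : ∀ g : G, Continuous fun x : ℝ => g • x)
    (hfree : ∀ g : G, g ≠ 1 → ∀ x : ℝ, g • x ≠ x) {g : G} {x : ℝ}
    (hx : g • x ≤ x) (y : ℝ) : g • y ≤ y := by
  rcases eq_or_lt_of_le hx with heq | hlt
  · have : g = 1 := fix_eq_one hfree heq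
    rw [this]; simp
  · exact le_of_lt (keyLT hcont hfree hlt y)





variable (hcont : ∀ g : G, Continuous fun x : ℝ => g • x)
variable (hfree : ∀ g : G, g ≠ 1 → ∀ x : ℝ, g • x ≠ x)
include hcont hfree

theorem sle {g h : G} (hgh : g • (0:ℝ) ≤ h • (0:ℝ)) (x : ℝ) : g • x ≤ h • x := by
  have h1 : (h⁻¹ * g) • (0:ℝ) ≤ 0 := by
    have := (hmono hcont hfree h⁻¹).monotone hgh
    simpa [smul_smul] using this
  have h2 := keyLE hcont hfree h1 x
  have := (hmono hcont hfree h).monotone h2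
  simpa [smul_smul, mul_assoc] using this

theorem slt {g h : G} (hgh : g • (0:ℝ) < h • (0:ℝ)) (x : ℝ) : g • x < h • x := by
  have h1 : (h⁻¹ * g) • (0:ℝ) < 0 := by
    have := (hmono hcont hfree h⁻¹) hgh
    simpa [smul_smul] using this
  have h2 := keyLT hcont hfree h1 x
  have := (hmono hcont hfree h) h2
  simpa [smul_smul, mul_assoc] using this

theorem mul_le' {g g' h h' : G} (h1 : g • (0:ℝ) ≤ g' • (0:ℝ)) (h2 : h • (0:ℝ) ≤ h' • (0:ℝ)) :
    (g * h) • (0:ℝ) ≤ (g' * h') • (0:ℝ) := by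
  rw [mul_smul, mul_smul]
  exact le_trans ((hmono hcont hfree g).monotone h2) (sle hcont hfree h1 _)

theorem mul_lt' {g g' h h' : G} (h1 : g • (0:ℝ) < g' • (0:ℝ)) (h2 : h • (0:ℝ) < h' • (0:ℝ)) :
    (g * h) • (0:ℝ) < (g' * h') • (0:ℝ) := by
  rw [mul_smul, mul_smul]
  exact lt_trans ((hmono hcont hfree g) h2) (slt hcont hfree h1 _)

theorem inv_le' {g h : G} (hgh : g • (0:ℝ) ≤ h • (0:ℝ)) :
    h⁻¹ • (0:ℝ) ≤ g⁻¹ • (0:ℝ) := by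
  have h1 : (h⁻¹ * g) • (0:ℝ) ≤ 0 := by
    have := (hmono hcont hfree h⁻¹).monotone hgh
    simpa [smul_smul] using this
  have h2 := keyLE hcont hfree h1 (g⁻¹ • (0:ℝ))
  simpa [smul_smul, mul_assoc] using h2

theorem pow_le' {g h : G} (hgh : g • (0:ℝ) ≤ h • (0:ℝ)) (n : ℕ) :
    (g ^ n) • (0:ℝ) ≤ (h ^ n) • (0:ℝ) := by
  induction n with
  | zero => simp
  | succ n ih =>
    rw [pow_succ, pow_succ]
    exact mul_le' hcont hfree ih hgh

theorem claimS {g h : G} (hgh : (g * h) • (0:ℝ) ≤ (h * g) • (0:ℝ)) (n : ℕ) :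
    ((g * h) ^ n * h) • (0:ℝ) ≤ (h * (g * h) ^ n) • (0:ℝ) := by
  induction n with
  | zero => simp
  | succ n ih =>
    have e1 : (g * h) ^ (n + 1) * h = (g * h) * ((g * h) ^ n * h) := by
      rw [pow_succ']; simp [mul_assoc]
    have step1 : ((g * h) * ((g * h) ^ n * h)) • (0:ℝ) ≤ ((g * h) * (h * (g * h) ^ n)) • (0:ℝ) :=
      mul_le' hcont hfree le_rfl ih
    have e2 : (g * h) * (h * (g * h) ^ n) = ((g * h) * h) * (g * h) ^ n := by group
    have hmul : ((g * h) * h) • (0:ℝ) ≤ ((h * g) * h) • (0:ℝ) :=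
      mul_le' hcont hfree hgh le_rfl
    have step2 : (((g * h) * h) * (g * h) ^ n) • (0:ℝ) ≤ (((h * g) * h) * (g * h) ^ n) • (0:ℝ) :=
      mul_le' hcont hfree hmul le_rfl
    have e3 : ((h * g) * h) * (g * h) ^ n = h * (g * h) ^ (n + 1) := by
      rw [pow_succ']; simp [mul_assoc]
    calc ((g * h) ^ (n + 1) * h) • (0:ℝ) = ((g * h) * ((g * h) ^ n * h)) • (0:ℝ) := by rw [e1]
      _ ≤ ((g * h) * (h * (g * h) ^ n)) • (0:ℝ) := step1
      _ = (((g * h) * h) * (g * h) ^ n) • (0:ℝ) := by rw [e2]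
      _ ≤ (((h * g) * h) * (g * h) ^ n) • (0:ℝ) := step2
      _ = (h * (g * h) ^ (n + 1)) • (0:ℝ) := by rw [e3]

theorem claimA {g h : G} (hgh : (g * h) • (0:ℝ) ≤ (h * g) • (0:ℝ)) (n : ℕ) :
    (g ^ n * h ^ n) • (0:ℝ) ≤ ((g * h) ^ n) • (0:ℝ) := by
  induction n with
  | zero => simp
  | succ n ih =>
    have e1 : g ^ (n + 1) * h ^ (n + 1) = g * ((g ^ n * h ^ n) * h) := by
      rw [pow_succ', pow_succ]; group
    have step1 : (g * ((g ^ n * h ^ n) * h)) • (0:ℝ) ≤ (g * ((g * h) ^ n * h)) • (0:ℝ) :=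
      mul_le' hcont hfree le_rfl (mul_le' hcont hfree ih le_rfl)
    have step2 : (g * ((g * h) ^ n * h)) • (0:ℝ) ≤ (g * (h * (g * h) ^ n)) • (0:ℝ) :=
      mul_le' hcont hfree le_rfl (claimS hcont hfree hgh n)
    have e2 : g * (h * (g * h) ^ n) = (g * h) ^ (n + 1) := by
      rw [pow_succ']; simp [mul_assoc]
    calc (g ^ (n + 1) * h ^ (n + 1)) • (0:ℝ) = (g * ((g ^ n * h ^ n) * h)) • (0:ℝ) := by rw [e1]
      _ ≤ (g * ((g * h) ^ n * h)) • (0:ℝ) := step1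
      _ ≤ (g * (h * (g * h) ^ n)) • (0:ℝ) := step2
      _ = ((g * h) ^ (n + 1)) • (0:ℝ) := by rw [e2]

theorem claimB {g h : G} (hgh : (g * h) • (0:ℝ) ≤ (h * g) • (0:ℝ)) (n : ℕ) :
    ((h * g) ^ n) • (0:ℝ) ≤ (h ^ n * g ^ n) • (0:ℝ) := by
  have hinv : (g⁻¹ * h⁻¹) • (0:ℝ) ≤ (h⁻¹ * g⁻¹) • (0:ℝ) := by
    have := inv_le' hcont hfree hgh
    simpa [mul_inv_rev] using this
  have hA := claimA hcont hfree hinv n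
  have := inv_le' hcont hfree hA
  have e1 : ((g⁻¹ * h⁻¹) ^ n)⁻¹ = (h * g) ^ n := by
    rw [← mul_inv_rev, ← inv_pow, inv_inv]
  have e2 : (g⁻¹ ^ n * h⁻¹ ^ n)⁻¹ = h ^ n * g ^ n := by
    rw [mul_inv_rev, ← inv_pow, ← inv_pow, inv_inv, inv_inv]
  rwa [e1, e2] at this



section Arch
variable (f : G) (posf : (0:ℝ) < f • (0:ℝ))
include posf

theorem pos_pow (n : ℕ) (hn : 1 ≤ n) : (0:ℝ) < (f ^ n) • (0:ℝ) := by
  induction n with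
  | zero => omega
  | succ n ih =>
    rcases Nat.eq_or_lt_of_le hn with h1 | h1
    · obtain rfl : n = 0 := by omega
      simpa using posf
    · have hn' : 1 ≤ n := by omega
      have h2 := ih hn'
      have h3 : (f ^ n) • (0:ℝ) < f • ((f ^ n) • (0:ℝ)) :=
        keyGT hcont hfree posf _
      rw [pow_succ', mul_smul]
      linarith

theorem fz_lt {k l : ℤ} (hkl : k < l) : (f ^ k) • (0:ℝ) < (f ^ l) • (0:ℝ) := by
  have h1 : f ^ l = f ^ (l - k) * f ^ k := by
    rw [← zpow_add, sub_add_cancel]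
  have h2 : f ^ (l - k) = f ^ (l - k).toNat := by
    rw [← zpow_natCast, Int.toNat_of_nonneg (by omega)]
  have h3 : (0:ℝ) < (f ^ (l - k).toNat) • (0:ℝ) :=
    pos_pow hcont hfree f posf _ (by omega)
  have h4 : (f ^ k) • (0:ℝ) < (f ^ (l - k).toNat) • ((f ^ k) • (0:ℝ)) :=
    keyGT hcont hfree h3 _
  rw [h1, mul_smul, h2]
  exact h4

theorem fz_mono : StrictMono (fun k : ℤ => (f ^ k) • (0:ℝ)) :=
  fun _ _ h => fz_lt hcont hfree f posf h

theorem arch (x C : ℝ) : ∃ n : ℕ, C < (f ^ n) • x := by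
  by_contra hb
  push_neg at hb
  set u : ℕ → ℝ := fun n => (f ^ n) • x with hu
  have humono : Monotone u := by
    have : ∀ n, u n < u (n + 1) := by
      intro n
      have : u (n + 1) = f • u n := by rw [hu]; simp only; rw [pow_succ', mul_smul]
      rw [this]
      exact keyGT hcont hfree posf _
    exact monotone_nat_of_le_succ fun n => (this n).le
  have hbdd : BddAbove (range u) := ⟨C, by rintro y ⟨n, rfl⟩; exact hb n⟩
  have hL : Filter.Tendsto u Filter.atTop (nhds (⨆ n, u n)) :=
    tendsto_atTop_ciSup humono hbdd
  set L := ⨆ n, u n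
  have h1 : Filter.Tendsto (fun n => f • u n) Filter.atTop (nhds (f • L)) :=
    ((hcont f).tendsto L).comp hL
  have h2 : (fun n => f • u n) = fun n => u (n + 1) := by
    funext n; rw [hu]; simp only; rw [pow_succ', mul_smul]
  have h3 : Filter.Tendsto (fun n => u (n + 1)) Filter.atTop (nhds L) :=
    hL.comp (Filter.tendsto_add_atTop_nat 1)
  rw [h2] at h1
  have h4 : f • L = L := tendsto_nhds_unique h1 h3
  have h5 : f = 1 := fix_eq_one hfree h4
  rw [h5] at posf; simp at posf

theorem arch_neg (C : ℝ) : ∃ n : ℕ, (f ^ (-(n:ℤ))) • (0:ℝ) < C := by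
  obtain ⟨n, hn⟩ := arch hcont hfree f posf C 0
  refine ⟨n, ?_⟩
  have key : (f ^ (n:ℤ)) • ((f ^ (-(n:ℤ))) • (0:ℝ)) = 0 := by
    rw [smul_smul, ← zpow_add]
    simp
  have h2 : (f ^ (n:ℤ)) • ((f ^ (-(n:ℤ))) • (0:ℝ)) < (f ^ (n:ℤ)) • C := by
    rw [key, zpow_natCast]; exact hn
  exact (hmono hcont hfree (f ^ (n:ℤ))).lt_iff_lt.mp h2

theorem exists_a (g : G) :
    ∃ k : ℤ, (f ^ k) • (0:ℝ) ≤ g • (0:ℝ) ∧ g • (0:ℝ) < (f ^ (k + 1)) • (0:ℝ) := by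
  obtain ⟨m, hm⟩ := arch hcont hfree f posf 0 (g • (0:ℝ))
  obtain ⟨n, hn⟩ := arch_neg hcont hfree f posf (g • (0:ℝ))
  have Hbdd : ∃ b : ℤ, ∀ z : ℤ, (f ^ z) • (0:ℝ) ≤ g • (0:ℝ) → z ≤ b := by
    refine ⟨(m:ℤ), fun z hz => ?_⟩
    by_contra hzm
    push_neg at hzm
    have := fz_lt hcont hfree f posf hzm
    rw [zpow_natCast] at this
    linarith
  have Hinh : ∃ z : ℤ, (f ^ z) • (0:ℝ) ≤ g • (0:ℝ) := ⟨-(n:ℤ), hn.le⟩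
  obtain ⟨k, hk1, hk2⟩ := Int.exists_greatest_of_bdd Hbdd Hinh
  refine ⟨k, hk1, ?_⟩
  by_contra hlt
  push_neg at hlt
  exact absurd (hk2 (k + 1) hlt) (by omega)

end Arch

omit hcont hfree in
theorem squeeze {x C : ℝ} (h : ∀ n : ℕ, |x| ≤ C / (n + 1)) : x = 0 := by
  by_contra hx
  have hpos : 0 < |x| := abs_pos.mpr hx
  obtain ⟨n, hn⟩ := exists_nat_gt (C / |x|)
  have h2 : (0:ℝ) < n + 1 := by positivity
  have hn2 : C / |x| < (n : ℝ) + 1 := by linarith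
  have h3 : C < ((n : ℝ) + 1) * |x| := (div_lt_iff₀ hpos).mp hn2
  have h4 : C / (n + 1) < |x| := (div_lt_iff₀ h2).mpr (by nlinarith)
  linarith [h n]

end HolderAux

open HolderAux in

/-- Hölder's theorem: a group acting freely by homeomorphisms on `ℝ` is abelian. -/
theorem holder_abelian {G : Type*} [Group G] [MulAction G ℝ]
    (hcont : ∀ g : G, Continuous fun x : ℝ => g • x)
    (hfree : ∀ g : G, g ≠ 1 → ∀ x : ℝ, g • x ≠ x) :
    ∀ g h : G, g * h = h * g := by
  intro g h
  by_cases hex : ∃ f : G, (0:ℝ) < f • (0:ℝ)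
  · obtain ⟨f, posf⟩ := hex
    choose a ha1 ha2 using exists_a hcont hfree f posf
    -- characterization of a
    have a_le_of : ∀ {k : ℤ} {u : G}, (f ^ k) • (0:ℝ) ≤ u • (0:ℝ) → k ≤ a u := by
      intro k u hk
      by_contra hlt
      push_neg at hlt
      have h1 : (f ^ (a u + 1)) • (0:ℝ) ≤ (f ^ k) • (0:ℝ) := by
        rcases eq_or_lt_of_le (by omega : a u + 1 ≤ k) with rfl | hlt2
        · exact le_rfl
        · exact (fz_lt hcont hfree f posf hlt2).le
      linarith [ha2 u]
    have lt_a_of : ∀ {k : ℤ} {u : G}, u • (0:ℝ) < (f ^ k) • (0:ℝ) → a u < k := by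
      intro k u hk
      by_contra hle
      push_neg at hle
      have h1 : (f ^ k) • (0:ℝ) ≤ (f ^ (a u)) • (0:ℝ) := by
        rcases eq_or_lt_of_le hle with rfl | hlt2
        · exact le_rfl
        · exact (fz_lt hcont hfree f posf hlt2).le
      linarith [ha1 u]
    have a_zpow : ∀ k : ℤ, a (f ^ k) = k := by
      intro k
      have h1 : k ≤ a (f ^ k) := a_le_of le_rfl
      have h2 : a (f ^ k) < k + 1 :=
        lt_a_of (fz_lt hcont hfree f posf (by omega : k < k + 1))
      omega
    have a_one : a 1 = 0 := by simpa using a_zpow 0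
    have a_mono : ∀ {u v : G}, u • (0:ℝ) ≤ v • (0:ℝ) → a u ≤ a v :=
      fun hv => a_le_of (le_trans (ha1 _) hv)
    have superadd : ∀ u v : G, a u + a v ≤ a (u * v) := by
      intro u v
      apply a_le_of
      rw [zpow_add]
      exact mul_le' hcont hfree (ha1 u) (ha1 v)
    have subadd : ∀ u v : G, a (u * v) ≤ a u + a v + 1 := by
      intro u v
      have e : f ^ (a u + 1) * f ^ (a v + 1) = f ^ (a u + a v + 2) := by
        rw [← zpow_add]; congr 1; ring
      have h1 : (u * v) • (0:ℝ) < (f ^ (a u + a v + 2)) • (0:ℝ) := by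
        rw [← e]; exact mul_lt' hcont hfree (ha2 u) (ha2 v)
      have := lt_a_of h1
      omega
    have superadd_pow : ∀ (u : G) (m : ℕ), (m : ℤ) * a u ≤ a (u ^ m) := by
      intro u m
      induction m with
      | zero => simp [a_one]
      | succ m ih =>
        have h1 := superadd (u ^ m) u
        rw [← pow_succ] at h1
        push_cast
        linarith
    have subadd_pow : ∀ (u : G) (m : ℕ), a (u ^ (m + 1)) ≤ ((m : ℤ) + 1) * a u + m := by
      intro u m
      induction m with
      | zero => simp
      | succ m ih =>
        have h1 := subadd (u ^ (m + 1)) u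
        rw [← pow_succ] at h1
        push_cast
        push_cast at ih
        linarith
    have ineqI : ∀ (u : G) (m n : ℕ),
        ((n : ℤ) + 1) * a (u ^ (m + 1)) ≤ ((m : ℤ) + 1) * a (u ^ (n + 1)) + m := by
      intro u m n
      have h1 : ((n : ℤ) + 1) * a (u ^ (m + 1)) ≤ a ((u ^ (m + 1)) ^ (n + 1)) := by
        have := superadd_pow (u ^ (m + 1)) (n + 1)
        push_cast at this ⊢
        linarith
      have h2 : a ((u ^ (n + 1)) ^ (m + 1)) ≤ ((m : ℤ) + 1) * a (u ^ (n + 1)) + m :=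
        subadd_pow (u ^ (n + 1)) m
      have e : (u ^ (m + 1)) ^ (n + 1) = (u ^ (n + 1)) ^ (m + 1) := by
        rw [← pow_mul, ← pow_mul, Nat.mul_comm]
      rw [e] at h1
      linarith
    -- translation number
    set T : G → ℝ := fun u => sSup (Set.range (fun n : ℕ => ((a (u ^ (n + 1)) : ℤ) : ℝ) / (n + 1)))
      with hT
    have hbdd : ∀ u : G,
        BddAbove (Set.range (fun n : ℕ => ((a (u ^ (n + 1)) : ℤ) : ℝ) / (n + 1))) := by
      intro u
      refine ⟨((a u : ℤ) : ℝ) + 1, ?_⟩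
      rintro y ⟨m, rfl⟩
      simp only
      rw [div_le_iff₀ (by positivity)]
      have := ineqI u m 0
      rw [pow_one] at this
      push_cast at this
      have hr : ((a (u ^ (m + 1)) : ℤ) : ℝ) ≤ ((m : ℝ) + 1) * ((a u : ℤ) : ℝ) + m := by
        exact_mod_cast (by linarith : (a (u ^ (m + 1)) : ℤ) ≤ ((m : ℤ) + 1) * a u + m)
      nlinarith [hr]
    have key1 : ∀ (u : G) (n : ℕ), ((a (u ^ (n + 1)) : ℤ) : ℝ) / (n + 1) ≤ T u :=
      fun u n => le_csSup (hbdd u) ⟨n, rfl⟩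
    have key2 : ∀ (u : G) (n : ℕ), T u ≤ (((a (u ^ (n + 1)) : ℤ) : ℝ) + 1) / (n + 1) := by
      intro u n
      apply csSup_le (Set.range_nonempty _)
      rintro y ⟨m, rfl⟩
      simp only
      rw [div_le_div_iff₀ (by positivity) (by positivity)]
      have hIr : ((n : ℝ) + 1) * ((a (u ^ (m + 1)) : ℤ) : ℝ)
          ≤ ((m : ℝ) + 1) * ((a (u ^ (n + 1)) : ℤ) : ℝ) + m := by
        exact_mod_cast ineqI u m n
      nlinarith [hIr]
    have key1m : ∀ (u : G) (n : ℕ), ((a (u ^ (n + 1)) : ℤ) : ℝ) ≤ ((n : ℝ) + 1) * T u := by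
      intro u n
      have := key1 u n
      rw [div_le_iff₀ (by positivity : (0:ℝ) < (n : ℝ) + 1)] at this
      linarith [mul_comm (T u) ((n : ℝ) + 1)]
    have key2m : ∀ (u : G) (n : ℕ), ((n : ℝ) + 1) * T u ≤ ((a (u ^ (n + 1)) : ℤ) : ℝ) + 1 := by
      intro u n
      have := key2 u n
      rw [le_div_iff₀ (by positivity : (0:ℝ) < (n : ℝ) + 1)] at this
      linarith [mul_comm (T u) ((n : ℝ) + 1)]
    -- additivity (ordered case)
    have Tadd0 : ∀ u v : G, (u * v) • (0:ℝ) ≤ (v * u) • (0:ℝ) → T (u * v) = T u + T v := by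
      intro u v huv
      have hkey : ∀ n : ℕ, |T (u * v) - (T u + T v)| ≤ 2 / (n + 1) := by
        intro n
        have hN : (0:ℝ) < (n : ℝ) + 1 := by positivity
        have c1 : a (u ^ (n+1)) + a (v ^ (n+1)) ≤ a ((u * v) ^ (n+1)) := by
          calc a (u ^ (n+1)) + a (v ^ (n+1)) ≤ a (u ^ (n+1) * v ^ (n+1)) := superadd _ _
            _ ≤ a ((u * v) ^ (n+1)) := a_mono (claimA hcont hfree huv (n+1))
        have c2 : a ((u * v) ^ (n+1)) ≤ a (v ^ (n+1)) + a (u ^ (n+1)) + 1 := by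
          calc a ((u * v) ^ (n+1)) ≤ a ((v * u) ^ (n+1)) := a_mono (pow_le' hcont hfree huv (n+1))
            _ ≤ a (v ^ (n+1) * u ^ (n+1)) := a_mono (claimB hcont hfree huv (n+1))
            _ ≤ a (v ^ (n+1)) + a (u ^ (n+1)) + 1 := subadd _ _
        have d1 : ((a (u ^ (n+1)) : ℤ) : ℝ) + ((a (v ^ (n+1)) : ℤ) : ℝ)
            ≤ ((a ((u * v) ^ (n+1)) : ℤ) : ℝ) := by exact_mod_cast c1
        have d2 : ((a ((u * v) ^ (n+1)) : ℤ) : ℝ)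
            ≤ ((a (v ^ (n+1)) : ℤ) : ℝ) + ((a (u ^ (n+1)) : ℤ) : ℝ) + 1 := by exact_mod_cast c2
        have k1 := key1m (u * v) n
        have k2 := key2m (u * v) n
        have k3 := key1m u n
        have k4 := key2m u n
        have k5 := key1m v n
        have k6 := key2m v n
        rw [le_div_iff₀ hN, ← abs_of_pos hN, ← abs_mul, abs_le]
        constructor
        · linarith
        · linarith
      have := squeeze hkey
      linarith [this]
    have T_one : T 1 = 0 := by
      rw [hT]
      simp only [one_pow, a_one, Int.cast_zero, zero_div, Set.range_const]
      exact csSup_singleton 0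
    have conjpow : ∀ (x u : G) (N : ℕ), (x⁻¹ * u * x) ^ N = x⁻¹ * u ^ N * x := by
      intro x u N
      induction N with
      | zero => simp
      | succ N ih => rw [pow_succ, ih, pow_succ]; group
    have Tconj : ∀ x u : G, T (x⁻¹ * u * x) = T u := by
      intro x u
      set K : ℤ := a x⁻¹ + a x with hK
      have hkey : ∀ n : ℕ, |T (x⁻¹ * u * x) - T u| ≤ ((|K| : ℤ) + 3 : ℝ) / (n + 1) := by
        intro n
        have hN : (0:ℝ) < (n : ℝ) + 1 := by positivity
        have e0 : (x⁻¹ * u * x) ^ (n+1) = x⁻¹ * u ^ (n+1) * x := conjpow x u (n+1)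
        have c1 : a x⁻¹ + a (u ^ (n+1)) + a x ≤ a ((x⁻¹ * u * x) ^ (n+1)) := by
          rw [e0]
          calc a x⁻¹ + a (u ^ (n+1)) + a x ≤ a x⁻¹ + a (u ^ (n+1) * x) := by
                linarith [superadd (u ^ (n+1)) x]
            _ ≤ a (x⁻¹ * (u ^ (n+1) * x)) := superadd _ _
            _ = a (x⁻¹ * u ^ (n+1) * x) := by rw [mul_assoc]
        have c2 : a ((x⁻¹ * u * x) ^ (n+1)) ≤ a x⁻¹ + a (u ^ (n+1)) + a x + 2 := by
          rw [e0]
          calc a (x⁻¹ * u ^ (n+1) * x) = a (x⁻¹ * (u ^ (n+1) * x)) := by rw [mul_assoc]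
            _ ≤ a x⁻¹ + a (u ^ (n+1) * x) + 1 := subadd _ _
            _ ≤ a x⁻¹ + (a (u ^ (n+1)) + a x + 1) + 1 := by linarith [subadd (u ^ (n+1)) x]
            _ = a x⁻¹ + a (u ^ (n+1)) + a x + 2 := by ring
        have d1 : ((K : ℝ)) + ((a (u ^ (n+1)) : ℤ) : ℝ) ≤ ((a ((x⁻¹ * u * x) ^ (n+1)) : ℤ) : ℝ) := by
          rw [hK]
          exact_mod_cast (by linarith :
            a x⁻¹ + a x + a (u ^ (n+1)) ≤ a ((x⁻¹ * u * x) ^ (n + 1)))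
        have d2 : ((a ((x⁻¹ * u * x) ^ (n+1)) : ℤ) : ℝ) ≤ (K : ℝ) + ((a (u ^ (n+1)) : ℤ) : ℝ) + 2 := by
          rw [hK]
          exact_mod_cast (by linarith :
            a ((x⁻¹ * u * x) ^ (n + 1)) ≤ a x⁻¹ + a x + a (u ^ (n+1)) + 2)
        have habs : (K : ℝ) ≤ ((|K| : ℤ) : ℝ) ∧ -(((|K| : ℤ) : ℝ)) ≤ (K : ℝ) := by
          constructor <;> [exact_mod_cast le_abs_self K; exact_mod_cast neg_abs_le K]
        have k1 := key1m (x⁻¹ * u * x) n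
        have k2 := key2m (x⁻¹ * u * x) n
        have k3 := key1m u n
        have k4 := key2m u n
        rw [le_div_iff₀ hN, ← abs_of_pos hN, ← abs_mul, abs_le]
        have hK3 : ((0:ℝ)) ≤ ((|K| : ℤ) : ℝ) := by positivity
        constructor
        · push_cast
          push_cast at habs
          linarith [habs.1, habs.2]
        · push_cast
          push_cast at habs
          linarith [habs.1, habs.2]
      have := squeeze hkey
      linarith [this]
    have Tinv : ∀ u : G, T u⁻¹ = -T u := by
      intro u
      have h1 := Tadd0 u u⁻¹ (by simp)
      rw [mul_inv_cancel, T_one] at h1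
      linarith
    have Tadd : ∀ u v : G, T (u * v) = T u + T v := by
      intro u v
      rcases le_total ((u * v) • (0:ℝ)) ((v * u) • (0:ℝ)) with hc | hc
      · exact Tadd0 u v hc
      · have h2 := Tadd0 v u hc
        have e : v⁻¹ * (v * u) * v = u * v := by group
        have h3 : T (u * v) = T (v * u) := by rw [← e, Tconj]
        rw [h3, h2]
        ring
    have Tpos : ∀ u : G, 0 < u • (0:ℝ) → 0 < T u := by
      intro u hu
      obtain ⟨m, hm⟩ := arch hcont hfree u hu 0 (f • (0:ℝ))
      have hm0 : m ≠ 0 := by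
        rintro rfl
        simp at hm
        linarith
      obtain ⟨n, rfl⟩ : ∃ n, m = n + 1 := ⟨m - 1, by omega⟩
      have h1 : 1 ≤ a (u ^ (n + 1)) := by
        apply a_le_of
        rw [zpow_one]
        exact hm.le
      have h2 := key1 u n
      have h3 : (0:ℝ) < ((a (u ^ (n + 1)) : ℤ) : ℝ) / (n + 1) := by
        apply div_pos _ (by positivity)
        exact_mod_cast lt_of_lt_of_le zero_lt_one (by exact_mod_cast h1)
      linarith
    -- conclusion
    set c : G := (g * h) * (h * g)⁻¹ with hc
    have hTc : T c = 0 := by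
      rw [hc, Tadd, Tinv, Tadd, Tadd]
      ring
    have hcone : c = 1 := by
      rcases lt_trichotomy (c • (0:ℝ)) 0 with hlt | heq | hgt
      · exfalso
        have hpos : 0 < c⁻¹ • (0:ℝ) := by
          have hiff := (hmono hcont hfree c).lt_iff_lt (a := (0:ℝ)) (b := c⁻¹ • (0:ℝ))
          apply hiff.mp
          show c • (0:ℝ) < c • (c⁻¹ • (0:ℝ))
          rw [smul_inv_smul]
          exact hlt
        have := Tpos c⁻¹ hpos
        rw [Tinv, hTc] at this
        linarith
      · exact fix_eq_one hfree heq
      · exfalso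
        have := Tpos c hgt
        rw [hTc] at this
        linarith
    have := mul_inv_eq_one.mp hcone
    exact this
  · push_neg at hex
    have hall : ∀ u : G, u = 1 := by
      intro u
      have h1 : u • (0:ℝ) ≤ 0 := hex u
      have h2 : u⁻¹ • (0:ℝ) ≤ 0 := hex u⁻¹
      have h3 : (0:ℝ) ≤ u • (0:ℝ) := by
        have := (hmono hcont hfree u).monotone h2
        simpa [smul_inv_smul] using this
      exact fix_eq_one hfree (le_antisymm h1 h3)
    rw [hall g, hall h]
end
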